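/- Let a, b ∈ ℝ³ be unit vectors and let η = η_ab ∈ [0, π] be the angle between them. Then the spherical lune on which ⟨a, s⟩ is positive and ⟨b, s⟩ is negative has normalized measure μ{s ∈ S² : ⟨a, s⟩ > 0 and ⟨b, s⟩ < 0} = η/(2π). (This is the joint probability P^{++}(η) of the outcomes A = sign(⟨a, s⟩) = +1 and B = −sign(⟨b, s⟩) = +1 in Bell's local model.) -/

import Mathlib

open MeasureTheory
open scoped RealInnerProductSpace ENNReal

/-- Euclidean 3-space. -/
noncomputable abbrev E3 := EuclideanSpace ℝ (Fin 3)

/-- The unit sphere `S²` in `ℝ³`. -/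
noncomputable abbrev S2 := Metric.sphere (0 : E3) 1

/-- The (unnormalized) rotation-invariant surface measure on `S²`. -/
noncomputable def sphereMeasure : Measure S2 := (volume : Measure E3).toSphere

/-- The uniform probability measure on `S²`: the rotation-invariant surface measure
normalized to total mass 1. -/
noncomputable def uniformS2 : Measure S2 := (sphereMeasure Set.univ)⁻¹ • sphereMeasure

/-! Scaling the lune radially into the unit ball turns it into a solid cone, so (by the polar
decomposition of Lebesgue measure) its normalized measure is vol(cone ∩ ball) / vol(ball). In an
orthonormal frame `(e, a, u)` with `b = cos η • a + sin η • u`, the cone is `ℝ e` times a planar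
wedge of opening `η`. The plane `⟪e, x⟫ = t` meets the ball in a disk of radius `√(1 - t²)`, whose
part in the wedge has area `(1 - t²) η / 2`; integrating over `t` gives `(4/3)(η/2)`, against
`vol(ball) = 4π/3`. -/

open Real Set Metric InnerProductGeometry Module
open scoped Pointwise

theorem lintegral_Ioo_zero_one_ofReal :
    ∫⁻ r in Ioo (0 : ℝ) 1, ENNReal.ofReal r = .ofReal (1 / 2) := by
  rw [← ofReal_integral_eq_lintegral_ofReal
      (continuous_id'.integrableOn_Icc.mono_set (Ioo_subset_Icc_self (a := (0 : ℝ)) (b := 1)))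
      ((ae_restrict_iff' measurableSet_Ioo).2 (.of_forall fun r hr ↦ hr.1.le)),
    ← integral_Ioc_eq_integral_Ioo, ← intervalIntegral.integral_of_le zero_le_one, integral_id]
  norm_num

theorem volume_eq_of_polarCoord_symm_preimage_eq {S : Set (ℝ × ℝ)} (hS : MeasurableSet S)
    {α β : ℝ} (h : polarCoord.target ∩ polarCoord.symm ⁻¹' S = Ioo 0 1 ×ˢ Ioo α β) :
    volume S = ENNReal.ofReal ((β - α) / 2) := by
  have hS' : MeasurableSet (polarCoord.symm ⁻¹' S) := continuous_polarCoord_symm.measurable hS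
  calc volume S
      = ∫⁻ p in polarCoord.target, ENNReal.ofReal p.1 • S.indicator 1 (polarCoord.symm p) := by
        rw [lintegral_comp_polarCoord_symm, lintegral_indicator_one hS]
    _ = ∫⁻ p in polarCoord.target ∩ polarCoord.symm ⁻¹' S, ENNReal.ofReal p.1 := by
        rw [inter_comm, ← Measure.restrict_restrict hS', ← lintegral_indicator hS']
        congr with p
        by_cases hp : polarCoord.symm p ∈ S <;>
          simp only [indicator, mem_preimage, hp, if_true, if_false, Pi.one_apply, smul_eq_mul,
            mul_one, mul_zero]
    _ = (∫⁻ r in Ioo (0 : ℝ) 1, ENNReal.ofReal r) * volume (Ioo α β) := by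
        rw [h, Measure.volume_eq_prod, setLIntegral_prod _ (by fun_prop)]
        simp only [setLIntegral_const, lintegral_mul_const' _ _ measure_Ioo_lt_top.ne]
    _ = ENNReal.ofReal ((β - α) / 2) := by
        rw [lintegral_Ioo_zero_one_ofReal, Real.volume_Ioo, ← ENNReal.ofReal_mul (by norm_num)]
        ring_nf

theorem cos_pos_and_cos_sub_neg_iff {η θ : ℝ} (h0 : 0 ≤ η) (hπ : η ≤ π) (hθ : θ ∈ Ioo (-π) π) :
    (0 < cos θ ∧ cos (θ - η) < 0) ↔ θ ∈ Ioo (-(π / 2)) (η - π / 2) := by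
  constructor
  · rintro ⟨h1, h2⟩
    by_contra hout
    rw [mem_Ioo, not_and_or, not_lt, not_lt] at hout
    rcases hout with hlo | hhi
    · have := cos_nonpos_of_pi_div_two_le_of_le (x := -θ) (by linarith) (by linarith [hθ.1])
      rw [cos_neg] at this
      linarith
    · by_cases hθ2 : θ < π / 2
      · linarith [cos_nonneg_of_mem_Icc (x := θ - η) ⟨by linarith, by linarith⟩]
      · linarith [cos_nonpos_of_pi_div_two_le_of_le (x := θ) (by linarith) (by linarith [hθ.2])]
  · rintro ⟨h1, h2⟩
    refine ⟨cos_pos_of_mem_Ioo ⟨h1, by linarith⟩, ?_⟩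
    rw [← cos_neg, neg_sub]
    exact cos_neg_of_pi_div_two_lt_of_lt (by linarith) (by linarith)

/-- In polar coordinates this is the sector of angles `(-π/2, η - π/2)`. -/
def wedge (η : ℝ) : Set (ℝ × ℝ) := {p | 0 < p.1 ∧ cos η * p.1 + sin η * p.2 < 0}

theorem isOpen_wedge (η : ℝ) : IsOpen (wedge η) :=
  (isOpen_lt continuous_const continuous_fst).inter
    (isOpen_lt (by fun_prop : Continuous fun p : ℝ × ℝ ↦ cos η * p.1 + sin η * p.2)
      continuous_const)

theorem smul_mem_wedge {η r : ℝ} (hr : 0 < r) {p : ℝ × ℝ} (hp : p ∈ wedge η) : r • p ∈ wedge η := by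
  obtain ⟨h1, h2⟩ := hp
  refine ⟨by simpa using mul_pos hr h1, ?_⟩
  simp only [Prod.smul_fst, Prod.smul_snd, smul_eq_mul]
  nlinarith

theorem volume_wedge_inter_disk {η : ℝ} (h0 : 0 ≤ η) (hπ : η ≤ π) :
    volume {p ∈ wedge η | p.1 ^ 2 + p.2 ^ 2 < 1} = .ofReal (η / 2) := by
  have hm : MeasurableSet {p ∈ wedge η | p.1 ^ 2 + p.2 ^ 2 < 1} :=
    (isOpen_wedge η).measurableSet.inter (measurableSet_lt
      (by fun_prop : Measurable fun p : ℝ × ℝ ↦ p.1 ^ 2 + p.2 ^ 2) measurable_const)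
  rw [volume_eq_of_polarCoord_symm_preimage_eq hm (α := -(π / 2)) (β := η - π / 2)]
  · ring_nf
  ext ⟨r, θ⟩
  simp only [polarCoord_target, mem_inter_iff, mem_prod, mem_Ioi, mem_preimage,
    polarCoord_symm_apply, wedge, mem_ofPred_eq]
  have hrot : cos η * (r * cos θ) + sin η * (r * sin θ) = r * cos (θ - η) := by
    rw [cos_sub]; ring
  have hnorm : (r * cos θ) ^ 2 + (r * sin θ) ^ 2 = r ^ 2 := by
    rw [mul_pow, mul_pow, ← mul_add, cos_sq_add_sin_sq, mul_one]
  rw [hrot, hnorm]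
  constructor
  · rintro ⟨⟨hr, hθ⟩, ⟨h1, h2⟩, h3⟩
    refine ⟨⟨hr, by nlinarith⟩, (cos_pos_and_cos_sub_neg_iff h0 hπ hθ).1 ⟨?_, ?_⟩⟩
    · exact pos_of_mul_pos_right h1 hr.le
    · exact neg_of_mul_neg_right h2 hr.le
  · rintro ⟨⟨hr, hr1⟩, hθ⟩
    have hθ' : θ ∈ Ioo (-π) π := ⟨by linarith [hθ.1, pi_pos], by linarith [hθ.2, pi_pos]⟩
    obtain ⟨h1, h2⟩ := (cos_pos_and_cos_sub_neg_iff h0 hπ hθ').2 hθ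
    exact ⟨⟨hr, hθ'⟩, ⟨mul_pos hr h1, mul_neg_of_pos_of_neg hr h2⟩, by nlinarith⟩

theorem lintegral_ofReal_one_sub_sq : ∫⁻ t : ℝ, ENNReal.ofReal (1 - t ^ 2) = .ofReal (4 / 3) := by
  have hsupp : (fun t : ℝ ↦ ENNReal.ofReal (1 - t ^ 2)).support ⊆ Ioc (-1) 1 := by
    intro t ht
    rw [Function.mem_support, ne_eq, ENNReal.ofReal_eq_zero, not_le] at ht
    constructor <;> nlinarith
  have hint : IntegrableOn (fun t : ℝ ↦ 1 - t ^ 2) (Ioc (-1) 1) :=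
    (by fun_prop : Continuous fun t : ℝ ↦ 1 - t ^ 2).integrableOn_Icc.mono_set Ioc_subset_Icc_self
  have hnonneg : 0 ≤ᵐ[volume.restrict (Ioc (-1 : ℝ) 1)] fun t ↦ 1 - t ^ 2 :=
    (ae_restrict_iff' measurableSet_Ioc).2 (.of_forall fun t ht ↦ by
      simp only [Pi.zero_apply, sub_nonneg]; nlinarith [ht.1, ht.2])
  rw [← setLIntegral_eq_of_support_subset hsupp, ← ofReal_integral_eq_lintegral_ofReal hint hnonneg,
    ← intervalIntegral.integral_of_le (by norm_num), intervalIntegral.integral_sub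
      intervalIntegrable_const (intervalIntegral.intervalIntegrable_pow 2)]
  norm_num [integral_pow]

theorem smul_mem_cone_iff {C : Set (ℝ × ℝ)} (hC : ∀ r : ℝ, 0 < r → ∀ p ∈ C, r • p ∈ C) {r : ℝ}
    (hr : 0 < r) {p : ℝ × ℝ} : r • p ∈ C ↔ p ∈ C :=
  ⟨fun h ↦ by simpa [smul_smul, hr.ne'] using hC r⁻¹ (inv_pos.2 hr) _ h, hC r hr p⟩

theorem volume_cone_inter_disk {C : Set (ℝ × ℝ)} (hC : ∀ r : ℝ, 0 < r → ∀ p ∈ C, r • p ∈ C)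
    (ρ : ℝ) :
    volume {p ∈ C | p.1 ^ 2 + p.2 ^ 2 < ρ} =
      .ofReal ρ * volume {p ∈ C | p.1 ^ 2 + p.2 ^ 2 < 1} := by
  rcases le_or_gt ρ 0 with hρ | hρ
  · rw [ENNReal.ofReal_of_nonpos hρ, zero_mul, measure_eq_zero_iff_ae_notMem]
    exact .of_forall fun p hp ↦ by nlinarith [hp.2]
  have hR : 0 < √ρ := sqrt_pos.2 hρ
  have hscale : {p ∈ C | p.1 ^ 2 + p.2 ^ 2 < ρ} = √ρ • {p ∈ C | p.1 ^ 2 + p.2 ^ 2 < 1} := by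
    ext p
    rw [mem_smul_set_iff_inv_smul_mem₀ hR.ne', mem_ofPred_eq, mem_ofPred_eq,
      smul_mem_cone_iff hC (inv_pos.2 hR)]
    simp only [Prod.smul_fst, Prod.smul_snd, smul_eq_mul, mul_pow, ← mul_add, inv_pow,
      sq_sqrt hρ.le]
    rw [inv_mul_lt_one₀ hρ]
  rw [hscale, Measure.addHaar_smul, Module.finrank_prod, Module.finrank_self,
    show 1 + 1 = 2 from rfl, sq_sqrt hρ.le, abs_of_pos hρ]

theorem volume_cone_prod_inter_ball {C : Set (ℝ × ℝ)} (hC : ∀ r : ℝ, 0 < r → ∀ p ∈ C, r • p ∈ C)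
    (hCm : MeasurableSet C) :
    volume {q : ℝ × ℝ × ℝ | q.2 ∈ C ∧ q.2.1 ^ 2 + q.2.2 ^ 2 < 1 - q.1 ^ 2} =
      .ofReal (4 / 3) * volume {p ∈ C | p.1 ^ 2 + p.2 ^ 2 < 1} := by
  have hm : MeasurableSet {q : ℝ × ℝ × ℝ | q.2 ∈ C ∧ q.2.1 ^ 2 + q.2.2 ^ 2 < 1 - q.1 ^ 2} :=
    (measurable_snd hCm).inter (measurableSet_lt
      (by fun_prop : Measurable fun q : ℝ × ℝ × ℝ ↦ q.2.1 ^ 2 + q.2.2 ^ 2) (by fun_prop))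
  rw [Measure.volume_eq_prod, Measure.prod_apply hm]
  simp only [preimage_ofPred_eq]
  rw [lintegral_congr fun t ↦ volume_cone_inter_disk hC (1 - t ^ 2),
    lintegral_mul_const _ (by fun_prop), lintegral_ofReal_one_sub_sq]

noncomputable def euclideanFin3EquivProd : EuclideanSpace ℝ (Fin 3) ≃ᵐ ℝ × ℝ × ℝ :=
  (MeasurableEquiv.toLp 2 (Fin 3 → ℝ)).symm.trans <|
    (MeasurableEquiv.piFinSuccAbove (fun _ ↦ ℝ) 0).trans <|
      MeasurableEquiv.prodCongr (.refl ℝ) .finTwoArrow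

theorem euclideanFin3EquivProd_apply (x : EuclideanSpace ℝ (Fin 3)) :
    euclideanFin3EquivProd x = (x 0, x 1, x 2) := rfl

theorem measurePreserving_euclideanFin3EquivProd :
    MeasurePreserving euclideanFin3EquivProd :=
  (EuclideanSpace.volume_preserving_symm_measurableEquiv_toLp (Fin 3)).trans <|
    (volume_preserving_piFinSuccAbove (fun _ ↦ ℝ) 0).trans <|
      (MeasurePreserving.id volume).prod (volume_preserving_finTwoArrow ℝ)

theorem EuclideanSpace.norm_sq_fin3 (x : EuclideanSpace ℝ (Fin 3)) :
    ‖x‖ ^ 2 = x 0 ^ 2 + x 1 ^ 2 + x 2 ^ 2 := by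
  simp [EuclideanSpace.norm_sq_eq, Fin.sum_univ_three]

section OrthonormalFrame

variable {E : Type*} [NormedAddCommGroup E] [InnerProductSpace ℝ E] [FiniteDimensional ℝ E]

theorem exists_orthonormalBasis_fin_three_eq_smul (hE : finrank ℝ E = 3) {a v : E}
    (ha : ‖a‖ = 1) (hav : ⟪a, v⟫ = 0) :
    ∃ B : OrthonormalBasis (Fin 3) ℝ E, B 1 = a ∧ v = ‖v‖ • B 2 := by
  have hcard : finrank ℝ E = Fintype.card (Fin 3) := by simpa using hE
  rcases eq_or_ne v 0 with rfl | hv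
  · have hon : Orthonormal ℝ (({1} : Set (Fin 3)).domRestrict ![0, a, 0]) := by
      rw [orthonormal_iff_ite]
      rintro ⟨i, rfl⟩ ⟨j, rfl⟩
      simp [Set.domRestrict_apply, ha]
    obtain ⟨B, hB⟩ := hon.exists_orthonormalBasis_extension_of_card_eq hcard
    exact ⟨B, hB 1 rfl, by simp⟩
  · have hon : Orthonormal ℝ (({1, 2} : Set (Fin 3)).domRestrict ![0, a, ‖v‖⁻¹ • v]) := by
      rw [orthonormal_iff_ite]
      rintro ⟨i, hi⟩ ⟨j, hj⟩
      simp only [mem_insert_iff, mem_singleton_iff] at hi hj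
      rcases hi with rfl | rfl <;> rcases hj with rfl | rfl <;>
        simp [Set.domRestrict_apply, ha, real_inner_smul_right, real_inner_smul_left, hav,
          real_inner_comm a v, norm_smul, hv]
    obtain ⟨B, hB⟩ := hon.exists_orthonormalBasis_extension_of_card_eq hcard
    refine ⟨B, hB 1 (by simp), ?_⟩
    rw [hB 2 (by simp)]
    simp [smul_smul, hv]

theorem exists_orthonormalBasis_fin_three_eq_cos_angle_smul_add (hE : finrank ℝ E = 3) {a b : E}
    (ha : ‖a‖ = 1) (hb : ‖b‖ = 1) :
    ∃ B : OrthonormalBasis (Fin 3) ℝ E,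
      B 1 = a ∧ b = cos (angle a b) • B 1 + sin (angle a b) • B 2 := by
  have hcos : cos (angle a b) = ⟪a, b⟫ := by simp [cos_angle, ha, hb]
  have hav : ⟪a, b - ⟪a, b⟫ • a⟫ = 0 := by
    rw [inner_sub_right, real_inner_smul_right, real_inner_self_eq_norm_sq, ha]; ring
  have hnorm : ‖b - ⟪a, b⟫ • a‖ = sin (angle a b) := by
    refine (sq_eq_sq₀ (norm_nonneg _) (sin_angle_nonneg a b)).1 ?_
    rw [sin_sq, hcos, norm_sub_sq_real, hb, real_inner_smul_right, norm_smul, ha,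
      real_inner_comm, norm_eq_abs, mul_one, sq_abs]
    ring
  obtain ⟨B, hB1, hB2⟩ := exists_orthonormalBasis_fin_three_eq_smul hE ha hav
  refine ⟨B, hB1, ?_⟩
  rw [← hnorm, ← hB2, hB1, hcos]
  abel

end OrthonormalFrame

theorem Ioo_smul_sphere_inter_cone {E : Type*} [NormedAddCommGroup E] [NormedSpace ℝ E]
    {K : Set E} (hK : ∀ r : ℝ, 0 < r → ∀ x ∈ K, r • x ∈ K) (h0 : (0 : E) ∉ K) :
    Ioo (0 : ℝ) 1 • (sphere (0 : E) 1 ∩ K) = ball 0 1 ∩ K := by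
  ext x
  constructor
  · rintro ⟨r, ⟨hr0, hr1⟩, s, ⟨hs, hsK⟩, rfl⟩
    rw [mem_sphere_zero_iff_norm] at hs
    refine ⟨?_, hK r hr0 s hsK⟩
    rwa [mem_ball_zero_iff, norm_smul, hs, mul_one, norm_of_nonneg hr0.le]
  · rintro ⟨hx, hxK⟩
    have hx0 : 0 < ‖x‖ := norm_pos_iff.2 fun h ↦ h0 (h ▸ hxK)
    refine ⟨‖x‖, ⟨hx0, mem_ball_zero_iff.1 hx⟩, ‖x‖⁻¹ • x, ⟨?_, hK _ (inv_pos.2 hx0) x hxK⟩, ?_⟩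
    · rw [mem_sphere_zero_iff_norm, norm_smul, norm_inv, norm_norm, inv_mul_cancel₀ hx0.ne']
    · exact smul_inv_smul₀ hx0.ne' x

theorem MeasureTheory.Measure.toSphere_preimage_cone {E : Type*} [NormedAddCommGroup E] [NormedSpace ℝ E]
    [MeasurableSpace E] [BorelSpace E] (μ : Measure E) {K : Set E} (hKm : MeasurableSet K)
    (hK : ∀ r : ℝ, 0 < r → ∀ x ∈ K, r • x ∈ K) (h0 : (0 : E) ∉ K) :
    μ.toSphere ((↑) ⁻¹' K) = finrank ℝ E * μ (ball 0 1 ∩ K) := by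
  rw [μ.toSphere_apply' (measurable_subtype_coe hKm), Subtype.image_preimage_coe,
    Ioo_smul_sphere_inter_cone hK h0]

def luneCone {E : Type*} [NormedAddCommGroup E] [InnerProductSpace ℝ E] (a b : E) : Set E :=
  {x | 0 < ⟪a, x⟫ ∧ ⟪b, x⟫ < 0}

section LuneCone

variable {E : Type*} [NormedAddCommGroup E] [InnerProductSpace ℝ E]

theorem isOpen_luneCone (a b : E) : IsOpen (luneCone a b) :=
  (isOpen_lt continuous_const (by fun_prop : Continuous fun x : E ↦ ⟪a, x⟫)).inter
    (isOpen_lt (by fun_prop : Continuous fun x : E ↦ ⟪b, x⟫) continuous_const)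

theorem smul_mem_luneCone {a b : E} {r : ℝ} (hr : 0 < r) {x : E} (hx : x ∈ luneCone a b) :
    r • x ∈ luneCone a b := by
  obtain ⟨h1, h2⟩ := hx
  simp only [luneCone, mem_ofPred_eq, real_inner_smul_right]
  exact ⟨mul_pos hr h1, mul_neg_of_pos_of_neg hr h2⟩

theorem zero_notMem_luneCone (a b : E) : (0 : E) ∉ luneCone a b :=
  fun ⟨h, _⟩ ↦ by simp at h

end LuneCone

theorem volume_ball_inter_luneCone {a b : E3} (ha : ‖a‖ = 1) (hb : ‖b‖ = 1) :
    volume (ball 0 1 ∩ luneCone a b) =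
      .ofReal (4 / 3) * .ofReal (angle a b / 2) := by
  obtain ⟨B, hB1, hbB⟩ :=
    exists_orthonormalBasis_fin_three_eq_cos_angle_smul_add (finrank_euclideanSpace_fin) ha hb
  set η := angle a b
  have hbx (x : E3) : ⟪b, x⟫ = cos η * ⟪a, x⟫ + sin η * ⟪B 2, x⟫ := by
    rw [hbB, inner_add_left, real_inner_smul_left, real_inner_smul_left, hB1]
  let Φ := B.measurableEquiv.trans euclideanFin3EquivProd
  have hΦ : MeasurePreserving Φ :=
    B.measurePreserving_measurableEquiv.trans measurePreserving_euclideanFin3EquivProd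
  have hpre : ball 0 1 ∩ luneCone a b =
      Φ ⁻¹' {q | q.2 ∈ wedge η ∧ q.2.1 ^ 2 + q.2.2 ^ 2 < 1 - q.1 ^ 2} := by
    ext x
    have hx : ‖x‖ ^ 2 = B.repr x 0 ^ 2 + B.repr x 1 ^ 2 + B.repr x 2 ^ 2 := by
      rw [← EuclideanSpace.norm_sq_fin3, B.repr.norm_map]
    simp only [Φ, MeasurableEquiv.trans_apply, euclideanFin3EquivProd_apply,
      OrthonormalBasis.measurableEquiv, mem_inter_iff, mem_ball_zero_iff, mem_preimage, luneCone,
      wedge, mem_ofPred_eq]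
    rw [← sq_lt_one_iff₀ (norm_nonneg x), hx]
    simp only [LinearIsometryEquiv.coe_toHomeomorph, Homeomorph.toMeasurableEquiv_coe,
      B.repr_apply_apply, hbx, hB1]
    exact ⟨fun ⟨hA, hP⟩ ↦ ⟨hP, by linarith⟩, fun ⟨hP, hA⟩ ↦ ⟨by linarith, hP⟩⟩
  rw [hpre, hΦ.measure_preimage_equiv, volume_cone_prod_inter_ball
    (fun r hr p hp ↦ smul_mem_wedge hr hp) (isOpen_wedge _).measurableSet,
    volume_wedge_inter_disk (angle_nonneg a b) (angle_le_pi a b)]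

theorem sphereMeasure_univ : sphereMeasure univ = .ofReal (4 * π) := by
  rw [sphereMeasure, Measure.toSphere_apply_univ, finrank_euclideanSpace_fin,
    EuclideanSpace.volume_ball_fin_three, ENNReal.ofReal_one, one_pow, one_mul,
    ← ENNReal.ofReal_natCast, ← ENNReal.ofReal_mul (by positivity)]
  congr 1
  push_cast
  ring

theorem sphereMeasure_preimage_luneCone {a b : E3} (ha : ‖a‖ = 1) (hb : ‖b‖ = 1) :
    sphereMeasure ((↑) ⁻¹' luneCone a b) = .ofReal (2 * angle a b) := by
  rw [sphereMeasure, Measure.toSphere_preimage_cone _ (isOpen_luneCone a b).measurableSet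
      (fun _ hr _ hx ↦ smul_mem_luneCone hr hx) (zero_notMem_luneCone a b),
    volume_ball_inter_luneCone ha hb, finrank_euclideanSpace_fin, ← ENNReal.ofReal_natCast,
    ← ENNReal.ofReal_mul (by positivity), ← ENNReal.ofReal_mul (by positivity)]
  congr 1
  push_cast
  ring

/-- For unit vectors `a, b` with angle `η` between them, the lune where `⟪a, s⟫ > 0` and
`⟪b, s⟫ < 0` has uniform measure `η/(2π)`; this is the joint probability `P⁺⁺(η)` in
Bell's local model. -/
theorem lune_pm_measure (a b : E3) (ha : ‖a‖ = 1) (hb : ‖b‖ = 1) :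
    uniformS2 {s : S2 | 0 < ⟪a, (s : E3)⟫ ∧ ⟪b, (s : E3)⟫ < 0}
      = ENNReal.ofReal (InnerProductGeometry.angle a b / (2 * Real.pi)) := by
  rw [uniformS2, Measure.smul_apply, smul_eq_mul, ← ENNReal.div_eq_inv_mul, sphereMeasure_univ]
  change sphereMeasure ((↑) ⁻¹' luneCone a b) / _ = _
  rw [sphereMeasure_preimage_luneCone ha hb, ← ENNReal.ofReal_div_of_pos (by positivity)]
  congr 1
  field_simp
  ring
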